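/- arXiv:2301.13427 — 2 statements merged into one kernel-verified Lean document; each statement's English description precedes it below -/
import Mathlib

section
/- For each fixed x ∈ ℝⁿ, the function Y ↦ xᵀY^{1/2}x is concave on the set S⁺ⁿ of symmetric positive semidefinite n×n real matrices, where Y^{1/2} denotes the unique symmetric positive semidefinite square root of Y. Consequently f(x, Y) = xᵀY^{1/2}x is a saddle function on ℝⁿ × S⁺ⁿ. -/
/-!
The PSD square root is the square root `CFC.sqrt` of the continuous functional calculus, which is
operator concave on every C⋆-algebra (`CFC.concaveOn_sqrt`). Real matrices do not form a (complex)
C⋆-algebra, so we complexify: `A ↦ A.map (algebraMap ℝ ℂ)` preserves and reflects positive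
semidefiniteness and commutes with `CFC.sqrt`, so `CFC.sqrt` is operator concave on real PSD
matrices as well. Since `M ↦ xᵀ M x` is linear and monotone for the Loewner order,
`Y ↦ xᵀ Y^{1/2} x` is concave. Convexity in `x` comes from the identity
`a Q(u) + b Q(w) - Q(a u + b w) = a b Q(u - w)` for a symmetric quadratic form `Q` and `a + b = 1`.
-/

open Matrix
open scoped MatrixOrder ComplexOrder

namespace Matrix

variable {n : Type*} [Fintype n]

lemma IsSymm.dotProduct_mulVec_comm {R : Type*} [CommSemiring R] {M : Matrix n n R}
    (hM : M.IsSymm) (u w : n → R) : w ⬝ᵥ M *ᵥ u = u ⬝ᵥ M *ᵥ w := by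
  rw [dotProduct_mulVec, ← mulVec_transpose, hM.eq, dotProduct_comm]

lemma PosSemidef.convexOn_dotProduct_mulVec {𝕜 : Type*} [Field 𝕜] [LinearOrder 𝕜]
    [IsStrictOrderedRing 𝕜] [StarRing 𝕜] [TrivialStar 𝕜] {M : Matrix n n 𝕜} (hM : M.PosSemidef) :
    ConvexOn 𝕜 Set.univ fun x => x ⬝ᵥ M *ᵥ x := by
  refine ⟨convex_univ, fun u _ w _ a b ha hb hab => ?_⟩
  have hsymm : w ⬝ᵥ M *ᵥ u = u ⬝ᵥ M *ᵥ w :=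
    (isHermitian_iff_isSymm.mp hM.isHermitian).dotProduct_mulVec_comm u w
  have hgap : a * (u ⬝ᵥ M *ᵥ u) + b * (w ⬝ᵥ M *ᵥ w) - (a • u + b • w) ⬝ᵥ M *ᵥ (a • u + b • w) =
      a * b * ((u - w) ⬝ᵥ M *ᵥ (u - w)) := by
    obtain rfl : b = 1 - a := by linarith
    simp only [mulVec_add, mulVec_sub, mulVec_smul, dotProduct_add, dotProduct_sub, add_dotProduct,
      sub_dotProduct, dotProduct_smul, smul_dotProduct, smul_eq_mul, hsymm]
    ring
  have hdiff := hM.dotProduct_mulVec_nonneg (u - w)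
  simp only [star_trivial, smul_eq_mul] at hdiff ⊢
  nlinarith [mul_nonneg (mul_nonneg ha hb) hdiff]

lemma _root_.ConcaveOn.dotProduct_mulVec {E : Type*} [AddCommGroup E] [Module ℝ E] {s : Set E}
    {f : E → Matrix n n ℝ} (hf : ConcaveOn ℝ s f) (x : n → ℝ) :
    ConcaveOn ℝ s fun y => x ⬝ᵥ f y *ᵥ x := by
  refine ⟨hf.1, fun A hA B hB a b ha hb hab => ?_⟩
  have hgap := (le_iff.mp (hf.2 hA hB ha hb hab)).dotProduct_mulVec_nonneg x
  simp only [star_trivial, sub_mulVec, add_mulVec, smul_mulVec, dotProduct_sub, dotProduct_add,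
    dotProduct_smul, smul_eq_mul] at hgap ⊢
  linarith

lemma dotProduct_mulVec_map_ofReal (A : Matrix n n ℝ) (x : n → ℝ) :
    star (algebraMap ℝ ℂ ∘ x) ⬝ᵥ A.map (algebraMap ℝ ℂ) *ᵥ (algebraMap ℝ ℂ ∘ x) =
      algebraMap ℝ ℂ (x ⬝ᵥ A *ᵥ x) := by
  simp [dotProduct, mulVec, Complex.ofReal_sum]

variable [DecidableEq n]

lemma PosSemidef.map_ofReal {A : Matrix n n ℝ} (hA : A.PosSemidef) :
    (A.map (algebraMap ℝ ℂ)).PosSemidef := by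
  obtain ⟨B, rfl⟩ := CStarAlgebra.nonneg_iff_eq_star_mul_self.mp hA.nonneg
  rw [star_eq_conjTranspose, Matrix.map_mul, conjTranspose_map _ fun _ => by simp]
  exact posSemidef_conjTranspose_mul_self _

lemma posSemidef_map_ofReal_iff {A : Matrix n n ℝ} :
    (A.map (algebraMap ℝ ℂ)).PosSemidef ↔ A.PosSemidef := by
  refine ⟨fun h => .of_dotProduct_mulVec_nonneg ?_ fun x => ?_, PosSemidef.map_ofReal⟩
  · have hherm := h.isHermitian
    rw [IsHermitian, ← conjTranspose_map _ fun _ => by simp] at hherm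
    exact Matrix.map_injective (algebraMap ℝ ℂ).injective hherm
  · have hx := h.dotProduct_mulVec_nonneg (algebraMap ℝ ℂ ∘ x)
    rw [dotProduct_mulVec_map_ofReal] at hx
    simpa using hx

lemma cfcSqrt_map_ofReal {A : Matrix n n ℝ} (hA : A.PosSemidef) :
    CFC.sqrt (A.map (algebraMap ℝ ℂ)) = (CFC.sqrt A).map (algebraMap ℝ ℂ) :=
  CFC.sqrt_unique (by rw [← Matrix.map_mul, CFC.sqrt_mul_sqrt_self A])
    (CFC.sqrt_nonneg A).posSemidef.map_ofReal.nonneg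

open scoped Matrix.Norms.L2Operator in
theorem concaveOn_cfcSqrt_real : ConcaveOn ℝ (Set.Ici (0 : Matrix n n ℝ)) CFC.sqrt := by
  refine ⟨convex_Ici 0, fun A hA B hB a b ha hb hab => ?_⟩
  have hC := (CFC.concaveOn_sqrt (A := Matrix n n ℂ)).2
    hA.posSemidef.map_ofReal.nonneg hB.posSemidef.map_ofReal.nonneg ha hb hab
  have hmap : a • A.map (algebraMap ℝ ℂ) + b • B.map (algebraMap ℝ ℂ) =
      (a • A + b • B).map (algebraMap ℝ ℂ) := by
    ext; simp
  rw [hmap, cfcSqrt_map_ofReal hA.posSemidef, cfcSqrt_map_ofReal hB.posSemidef,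
    cfcSqrt_map_ofReal ((convex_Ici 0) hA hB ha hb hab).posSemidef] at hC
  have hgap : (CFC.sqrt (a • A + b • B) - (a • CFC.sqrt A + b • CFC.sqrt B)).map (algebraMap ℝ ℂ) =
      (CFC.sqrt (a • A + b • B)).map (algebraMap ℝ ℂ) -
        (a • (CFC.sqrt A).map (algebraMap ℝ ℂ) + b • (CFC.sqrt B).map (algebraMap ℝ ℂ)) := by
    ext; simp
  rw [le_iff, ← posSemidef_map_ofReal_iff, hgap]
  exact le_iff.mp hC

end Matrix

/-- For fixed `x ∈ ℝⁿ`, the function `Y ↦ xᵀ Y^{1/2} x` is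
concave on the set `S⁺ⁿ` of symmetric positive semidefinite matrices, where
`Y^{1/2}` is the unique symmetric PSD square root (here given by any function
`sqrt` satisfying the defining property of the matrix square root on `S⁺ⁿ`).
Consequently `f(x, Y) = xᵀ Y^{1/2} x` is a saddle function on `ℝⁿ × S⁺ⁿ`:
it is additionally convex in `x` for each fixed `Y ∈ S⁺ⁿ`. -/
theorem sqrt_quad_form_saddle (n : ℕ)
    (sqrt : Matrix (Fin n) (Fin n) ℝ → Matrix (Fin n) (Fin n) ℝ)
    (hsqrt : ∀ Y : Matrix (Fin n) (Fin n) ℝ, Y.PosSemidef →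
      (sqrt Y).PosSemidef ∧ sqrt Y * sqrt Y = Y) :
    (∀ x : Fin n → ℝ,
      ConcaveOn ℝ {Y : Matrix (Fin n) (Fin n) ℝ | Y.PosSemidef}
        fun Y : Matrix (Fin n) (Fin n) ℝ => x ⬝ᵥ (sqrt Y *ᵥ x)) ∧
    (∀ Y : Matrix (Fin n) (Fin n) ℝ, Y.PosSemidef →
      ConvexOn ℝ Set.univ fun x : Fin n → ℝ => x ⬝ᵥ (sqrt Y *ᵥ x)) := by
  refine ⟨fun x => ?_, fun Y hY => (hsqrt Y hY).1.convexOn_dotProduct_mulVec⟩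
  have hcone : {Y : Matrix (Fin n) (Fin n) ℝ | Y.PosSemidef} = Set.Ici 0 :=
    Set.ext fun _ => nonneg_iff_posSemidef.symm
  have hsqrt_eq : Set.EqOn CFC.sqrt sqrt (Set.Ici 0) := fun Y hY =>
    CFC.sqrt_unique (hsqrt Y hY.posSemidef).2 (hsqrt Y hY.posSemidef).1.nonneg
  rw [hcone]
  exact (concaveOn_cfcSqrt_real.congr hsqrt_eq).dotProduct_mulVec x
end

section
/- (Equivalence of the robust cost LP and its dualized form.) Let A ∈ ℝ^{p×n}, b ∈ ℝᵖ, F ∈ ℝ^{m×n}, g ∈ ℝᵐ, and suppose C = {c ∈ ℝⁿ : Fc ≤ g} is nonempty. If (x⋆, λ⋆) is an optimal solution of the LP: minimize gᵀλ subject to Ax = b, x ≥ 0, Fᵀλ = x, λ ≥ 0 (over variables x ∈ ℝⁿ, λ ∈ ℝᵐ), then x⋆ is an optimal solution of the robust cost LP: minimize sup_{c ∈ C} cᵀx subject to Ax = b, x ≥ 0, and the two problems have the same optimal value. -/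
/-!
Weak duality bounds the worst-case cost of `x⋆` by `gᵀλ⋆`. Conversely, for a feasible `x`
every `λ ≥ 0` with `Fᵀλ = x` is feasible for the dualized LP, so `gᵀλ ≥ gᵀλ⋆`; Farkas' lemma
applied to the homogenized system `[F g; 0 1]` then produces, for each `w < gᵀλ⋆`, either a
point of `C` with `cᵀx > w` or a recession direction of `C` along which `cᵀx` is unbounded.
Farkas' lemma comes from hyperplane separation, once finitely generated cones are known to be
closed, which follows from the conic Carathéodory theorem.
-/

open Matrix Function

section Caratheodory

variable {𝕜 M ι : Type*} [Field 𝕜] [LinearOrder 𝕜] [IsStrictOrderedRing 𝕜]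
  [AddCommGroup M] [Module 𝕜 M] [Finite ι]

theorem exists_sub_smul_nonneg_apply_eq_zero {t r : ι → 𝕜} (ht : 0 ≤ t) (hr : ∃ i, 0 < r i) :
    ∃ ρ : 𝕜, 0 ≤ t - ρ • r ∧ ∃ i, 0 < r i ∧ (t - ρ • r) i = 0 := by
  obtain ⟨i₀, hi₀, hmin⟩ := Set.exists_min_image {i | 0 < r i} (fun i => t i / r i)
    (Set.toFinite _) hr
  have hρ : 0 ≤ t i₀ / r i₀ := div_nonneg (ht i₀) hi₀.le
  refine ⟨t i₀ / r i₀, fun i => ?_, i₀, hi₀, by simp [div_mul_cancel₀ _ hi₀.ne']⟩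
  rcases lt_or_ge 0 (r i) with hri | hri
  · have := hmin i hri
    simp only [Pi.zero_apply, Pi.sub_apply, Pi.smul_apply, smul_eq_mul, sub_nonneg]
    rwa [← le_div_iff₀ hri]
  · simp only [Pi.zero_apply, Pi.sub_apply, Pi.smul_apply, smul_eq_mul, sub_nonneg]
    exact (mul_nonpos_of_nonneg_of_nonpos hρ hri).trans (ht i)

theorem exists_nonneg_support_ssubset_of_map_eq_zero (L : (ι → 𝕜) →ₗ[𝕜] M) {t r : ι → 𝕜}
    (ht : 0 ≤ t) (hr : r ≠ 0) (hrt : support r ⊆ support t) (hLr : L r = 0) :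
    ∃ t', 0 ≤ t' ∧ L t' = L t ∧ support t' ⊂ support t := by
  wlog hpos : ∃ i, 0 < r i generalizing r
  · push Not at hpos
    refine this (neg_ne_zero.2 hr) (by rwa [support_neg]) (by rw [map_neg, hLr, neg_zero]) ?_
    obtain ⟨i, hi⟩ := Function.ne_iff.1 hr
    exact ⟨i, neg_pos.2 ((hpos i).lt_of_ne hi)⟩
  obtain ⟨ρ, hnonneg, i, hi, hzero⟩ := exists_sub_smul_nonneg_apply_eq_zero ht hpos
  refine ⟨t - ρ • r, hnonneg, by simp [hLr], ?_⟩
  refine Set.ssubset_iff_subset_ne.2 ⟨fun j hj => ?_, fun h => ?_⟩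
  · by_contra htj
    have hrj : r j = 0 := notMem_support.1 fun hrj => htj (hrt hrj)
    exact hj (by simp [notMem_support.1 htj, hrj])
  · have : i ∈ support (t - ρ • r) := h ▸ hrt hi.ne'
    exact this hzero

/-- Conic Carathéodory theorem. -/
theorem exists_nonneg_map_eq_injective_on_support (L : (ι → 𝕜) →ₗ[𝕜] M) {t : ι → 𝕜}
    (ht : 0 ≤ t) :
    ∃ t', 0 ≤ t' ∧ L t' = L t ∧ ∀ r, support r ⊆ support t' → L r = 0 → r = 0 := by
  induction hn : (support t).ncard using Nat.strong_induction_on generalizing t with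
  | _ n ih =>
  by_contra! hfail
  obtain ⟨r, hrt, hLr, hr⟩ := hfail t ht rfl
  obtain ⟨t', ht', hLt', hsub⟩ := exists_nonneg_support_ssubset_of_map_eq_zero L ht hr hrt hLr
  obtain ⟨t'', ht'', hLt'', hinj⟩ := ih _ (hn ▸ Set.ncard_lt_ncard hsub) ht' rfl
  obtain ⟨r', hr't, hLr', hr'⟩ := hfail t'' ht'' (hLt''.trans hLt')
  exact hr' (hinj r' hr't hLr')

end Caratheodory

section Farkas

variable {E ι : Type*} [Finite ι] [TopologicalSpace E] [AddCommGroup E] [Module ℝ E]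
  [IsTopologicalAddGroup E] [ContinuousSMul ℝ E] [T2Space E]

theorem isClosed_image_nonneg_support_subset (L : (ι → ℝ) →ₗ[ℝ] E) {s : Set ι}
    (hL : ∀ r, support r ⊆ s → L r = 0 → r = 0) :
    IsClosed (L '' {t | 0 ≤ t ∧ support t ⊆ s}) := by
  let W : Submodule ℝ (ι → ℝ) := Submodule.pi sᶜ fun _ => ⊥
  have hW : ∀ t, t ∈ W ↔ support t ⊆ s := fun t => by
    simp only [W, Submodule.mem_pi, Set.mem_compl_iff, Submodule.mem_bot, support_subset_iff']
  have hinj : LinearMap.ker (L.domRestrict W) = ⊥ :=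
    LinearMap.ker_eq_bot'.2 fun r hr => Subtype.ext (hL r ((hW r).1 r.2) hr)
  have himage :
      L '' {t | 0 ≤ t ∧ support t ⊆ s} = L.domRestrict W '' (W.subtype ⁻¹' Set.Ici 0) := by
    ext y
    constructor
    · rintro ⟨t, ⟨ht, hts⟩, rfl⟩
      exact ⟨⟨t, (hW t).2 hts⟩, ht, rfl⟩
    · rintro ⟨t, ht, rfl⟩
      exact ⟨t, ⟨ht, (hW t).1 t.2⟩, rfl⟩
  rw [himage]
  exact (LinearMap.isClosedEmbedding_of_injective hinj).isClosedMap _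
    (isClosed_Ici.preimage continuous_subtype_val)

theorem isClosed_image_Ici (L : (ι → ℝ) →ₗ[ℝ] E) : IsClosed (L '' Set.Ici 0) := by
  have hunion : L '' Set.Ici 0 = ⋃ s ∈ {s : Set ι | ∀ r, support r ⊆ s → L r = 0 → r = 0},
      L '' {t | 0 ≤ t ∧ support t ⊆ s} := by
    ext y
    simp only [Set.mem_iUnion, exists_prop]
    constructor
    · rintro ⟨t, ht, rfl⟩
      obtain ⟨t', ht', hLt', hinj⟩ := exists_nonneg_map_eq_injective_on_support L ht
      exact ⟨support t', hinj, t', ⟨ht', subset_rfl⟩, hLt'⟩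
    · rintro ⟨s, -, t, ⟨ht, -⟩, rfl⟩
      exact ⟨t, ht, rfl⟩
  rw [hunion]
  exact (Set.toFinite _).isClosed_biUnion fun s hs => isClosed_image_nonneg_support_subset L hs

theorem exists_strongDual_nonneg_of_notMem_image_Ici [LocallyConvexSpace ℝ E]
    (L : (ι → ℝ) →ₗ[ℝ] E) {b : E} (hb : b ∉ L '' Set.Ici 0) :
    ∃ f : StrongDual ℝ E, (∀ t, 0 ≤ t → 0 ≤ f (L t)) ∧ f b < 0 := by
  let K : ProperCone ℝ E := ⟨(PointedCone.positive ℝ (ι → ℝ)).map L, isClosed_image_Ici L⟩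
  obtain ⟨f, hf, hfb⟩ := K.hyperplane_separation_point hb
  exact ⟨f, fun t ht => hf _ ⟨t, ht, rfl⟩, hfb⟩

end Farkas

theorem Matrix.exists_mulVec_nonneg_dotProduct_neg {ι κ : Type*} [Fintype ι] [Fintype κ]
    (M : Matrix ι κ ℝ) {b : κ → ℝ} (hb : ∀ t, 0 ≤ t → Mᵀ *ᵥ t ≠ b) :
    ∃ y, 0 ≤ M *ᵥ y ∧ b ⬝ᵥ y < 0 := by
  classical
  obtain ⟨f, hf, hfb⟩ := exists_strongDual_nonneg_of_notMem_image_Ici Mᵀ.mulVecLin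
    (b := b) fun ⟨t, ht, h⟩ => hb t ht h
  set y := (dotProductEquiv ℝ κ).symm f.toLinearMap
  have hfy : ∀ u, f u = u ⬝ᵥ y := fun u => by
    rw [dotProduct_comm, ← dotProductEquiv_apply_apply, LinearEquiv.apply_symm_apply]
    rfl
  refine ⟨y, fun i => ?_, by rwa [← hfy]⟩
  have := hf (Pi.single i 1) (Pi.single_nonneg.2 zero_le_one)
  rwa [hfy, mulVecLin_apply, dotProduct_comm, dotProduct_mulVec, vecMul_transpose,
    dotProduct_single_one] at this

section RobustLP

variable {m n : Type*} {F : Matrix m n ℝ} {g : m → ℝ}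

theorem dotProduct_transpose_mulVec_le [Fintype m] [Fintype n] {c : n → ℝ} {l : m → ℝ}
    (hc : F *ᵥ c ≤ g) (hl : 0 ≤ l) : c ⬝ᵥ (Fᵀ *ᵥ l) ≤ g ⬝ᵥ l := by
  rw [dotProduct_mulVec, vecMul_transpose]
  exact dotProduct_le_dotProduct_of_nonneg_right hc hl

theorem exists_mulVec_le_lt_dotProduct_of_recession [Fintype n] {c₀ d x : n → ℝ}
    (hc₀ : F *ᵥ c₀ ≤ g) (hd : F *ᵥ d ≤ 0) (hdx : 0 < d ⬝ᵥ x) (w : ℝ) :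
    ∃ c, F *ᵥ c ≤ g ∧ w < c ⬝ᵥ x := by
  set s := (|w - c₀ ⬝ᵥ x| + 1) / (d ⬝ᵥ x)
  have hs : 0 ≤ s := by positivity
  refine ⟨c₀ + s • d, ?_, ?_⟩
  · calc F *ᵥ (c₀ + s • d) = F *ᵥ c₀ + s • F *ᵥ d := by rw [mulVec_add, mulVec_smul]
      _ ≤ g + s • 0 := add_le_add hc₀ (smul_le_smul_of_nonneg_left hd hs)
      _ = g := by rw [smul_zero, add_zero]
  · rw [add_dotProduct, smul_dotProduct, smul_eq_mul, div_mul_cancel₀ _ hdx.ne']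
    linarith [le_abs_self (w - c₀ ⬝ᵥ x)]

variable (F g) in
def homogenization : Matrix (m ⊕ Unit) (n ⊕ Unit) ℝ := fromBlocks F (replicateCol Unit g) 0 1

theorem homogenization_mulVec [Fintype n] (y : n ⊕ Unit → ℝ) :
    homogenization F g *ᵥ y =
      Sum.elim (F *ᵥ (y ∘ Sum.inl) + y (Sum.inr ()) • g) fun _ => y (Sum.inr ()) := by
  ext (i | i) <;> simp [homogenization, mulVec, dotProduct, mul_comm]

theorem homogenization_transpose_mulVec [Fintype m] (t : m ⊕ Unit → ℝ) :
    (homogenization F g)ᵀ *ᵥ t =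
      Sum.elim (Fᵀ *ᵥ (t ∘ Sum.inl)) fun _ => g ⬝ᵥ (t ∘ Sum.inl) + t (Sum.inr ()) := by
  ext (i | i) <;> simp [homogenization, mulVec, dotProduct, mul_comm]

/-- The nontrivial half of LP strong duality. -/
theorem exists_mulVec_le_lt_dotProduct [Fintype m] [Fintype n] (hC : ∃ c, F *ᵥ c ≤ g)
    {x : n → ℝ} {w : ℝ} (hw : ∀ l, 0 ≤ l → Fᵀ *ᵥ l = x → w < g ⬝ᵥ l) :
    ∃ c, F *ᵥ c ≤ g ∧ w < c ⬝ᵥ x := by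
  obtain ⟨y, hMy, hy⟩ := (homogenization F g).exists_mulVec_nonneg_dotProduct_neg
    (b := Sum.elim x fun _ => w) fun t ht h => by
      rw [homogenization_transpose_mulVec] at h
      have hgl := hw (t ∘ Sum.inl) (fun i => ht (Sum.inl i))
        (funext fun j => congrFun h (Sum.inl j))
      have hτ : 0 ≤ t (Sum.inr ()) := ht _
      have := congrFun h (Sum.inr ())
      simp only [Sum.elim_inr] at this
      linarith
  rw [homogenization_mulVec] at hMy
  set c := y ∘ Sum.inl
  set τ := y (Sum.inr ())
  have hrows : 0 ≤ F *ᵥ c + τ • g := fun i => hMy (Sum.inl i)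
  have hτ : 0 ≤ τ := hMy (Sum.inr ())
  have hneg : c ⬝ᵥ x + τ * w < 0 := by
    convert hy using 1
    simp [c, τ, dotProduct, Fintype.sum_sum_type, mul_comm]
  rcases hτ.eq_or_lt with hτ0 | hτpos
  · obtain ⟨c₀, hc₀⟩ := hC
    refine exists_mulVec_le_lt_dotProduct_of_recession hc₀ (d := -c) ?_ ?_ w
    · simpa [mulVec_neg, ← hτ0] using hrows
    · simp only [← hτ0, zero_mul, add_zero] at hneg
      rwa [neg_dotProduct, neg_pos]
  · refine ⟨-τ⁻¹ • c, fun i => ?_, ?_⟩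
    · have := hrows i
      simp only [mulVec_smul, Pi.smul_apply, smul_eq_mul, Pi.add_apply, Pi.zero_apply] at this ⊢
      field_simp
      linarith
    · rw [smul_dotProduct, smul_eq_mul]
      field_simp
      linarith

end RobustLP

theorem EReal.coe_le_biSup_of_forall_lt {α : Type*} {s : Set α} {f : α → ℝ} {a : ℝ}
    (h : ∀ w < a, ∃ c ∈ s, w < f c) : (a : EReal) ≤ ⨆ c ∈ s, (f c : EReal) := by
  refine le_of_forall_lt fun z hz => ?_
  obtain ⟨w, hzw, hwa⟩ := EReal.exists_between_coe_real hz
  obtain ⟨c, hc, hwc⟩ := h w (EReal.coe_lt_coe_iff.1 hwa)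
  exact hzw.trans ((EReal.coe_lt_coe_iff.2 hwc).trans_le (le_iSup₂_of_le c hc le_rfl))

/-- equivalence of the robust cost LP and its dualized form:
if `C = {c : Fc ≤ g}` is nonempty and `(x⋆, λ⋆)` is optimal for the LP
`minimize gᵀλ s.t. Ax = b, x ≥ 0, Fᵀλ = x, λ ≥ 0`, then `x⋆` is optimal for
the robust cost LP `minimize sup_{c ∈ C} cᵀx s.t. Ax = b, x ≥ 0`, and the two
problems have the same optimal value. -/
theorem robust_lp_dualization_equivalence (n m p : ℕ)
    (A : Matrix (Fin p) (Fin n) ℝ) (b : Fin p → ℝ)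
    (F : Matrix (Fin m) (Fin n) ℝ) (g : Fin m → ℝ)
    (hC : {c : Fin n → ℝ | ∀ i, (F *ᵥ c) i ≤ g i}.Nonempty)
    (xs : Fin n → ℝ) (ls : Fin m → ℝ)
    (hfeas : A *ᵥ xs = b ∧ (∀ i, 0 ≤ xs i) ∧ Fᵀ *ᵥ ls = xs ∧ (∀ i, 0 ≤ ls i))
    (hopt : ∀ (x : Fin n → ℝ) (l : Fin m → ℝ),
      A *ᵥ x = b → (∀ i, 0 ≤ x i) → Fᵀ *ᵥ l = x → (∀ i, 0 ≤ l i) →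
        g ⬝ᵥ ls ≤ g ⬝ᵥ l) :
    (A *ᵥ xs = b ∧ (∀ i, 0 ≤ xs i)) ∧
    (∀ x : Fin n → ℝ, A *ᵥ x = b → (∀ i, 0 ≤ x i) →
      (⨆ c ∈ {c : Fin n → ℝ | ∀ i, (F *ᵥ c) i ≤ g i}, ((c ⬝ᵥ xs : ℝ) : EReal)) ≤
        ⨆ c ∈ {c : Fin n → ℝ | ∀ i, (F *ᵥ c) i ≤ g i}, ((c ⬝ᵥ x : ℝ) : EReal)) ∧
    (⨆ c ∈ {c : Fin n → ℝ | ∀ i, (F *ᵥ c) i ≤ g i}, ((c ⬝ᵥ xs : ℝ) : EReal)) =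
      ((g ⬝ᵥ ls : ℝ) : EReal) := by
  set C := {c : Fin n → ℝ | ∀ i, (F *ᵥ c) i ≤ g i}
  obtain ⟨hAxs, hxs, hFls, hls⟩ := hfeas
  have hupper : ⨆ c ∈ C, ((c ⬝ᵥ xs : ℝ) : EReal) ≤ ((g ⬝ᵥ ls : ℝ) : EReal) :=
    iSup₂_le fun c hc => EReal.coe_le_coe_iff.2 (hFls ▸ dotProduct_transpose_mulVec_le hc hls)
  have hlower : ∀ x, A *ᵥ x = b → (∀ i, 0 ≤ x i) →
      ((g ⬝ᵥ ls : ℝ) : EReal) ≤ ⨆ c ∈ C, ((c ⬝ᵥ x : ℝ) : EReal) := fun x hAx hx =>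
    EReal.coe_le_biSup_of_forall_lt fun w hw =>
      exists_mulVec_le_lt_dotProduct hC fun l hl hFl => hw.trans_le (hopt x l hAx hx hFl hl)
  exact ⟨⟨hAxs, hxs⟩, fun x hAx hx => hupper.trans (hlower x hAx hx),
    hupper.antisymm (hlower xs hAxs hxs)⟩
end
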